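/- arXiv:0910.2673 — 3 statements merged into one kernel-verified Lean document; each statement's English description precedes it below -/
import Mathlib

section
/- Let p ∈ ℝ[x_1,...,x_n] of degree d satisfy p(x) = 1 whenever s(x) = x_1 + ... + x_n = 1. Writing p = Σ_{|α|=d} c_α x^α + Σ_{|α|<d} c_α x^α, one has the identity p(x) = s(x)^d + Σ_{|α|<d} c_α x^α (1 - s(x)^{d-|α|}). -/
/-!
Multiply every monomial `c_α x^α` of `p` by `s^(d - |α|)` to obtain a polynomial `h` that is
homogeneous of degree `d` and agrees with `p` on the hyperplane `s = 1`. By homogeneity,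
`h(y) = s(y)^d p(y / s(y)) = s(y)^d` whenever `s(y) ≠ 0`, so `(h - s^d) s` vanishes everywhere
and hence `h = s^d`, since `s ≠ 0` and polynomials over `ℝ` form a domain. The identity is
`p = s^d + (p - h)`.
-/

open MvPolynomial

namespace MvPolynomial

variable {σ R : Type*}

theorem eq_of_eval_eq_of_eval_ne_zero [CommRing R] [IsDomain R] [Infinite R]
    {f g q : MvPolynomial σ R} (hq : q ≠ 0) (h : ∀ x, eval x q ≠ 0 → eval x f = eval x g) :
    f = g := by
  have hprod : (f - g) * q = 0 := funext fun x => by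
    by_cases hx : eval x q = 0
    · simp [hx]
    · simp [h x hx]
  exact sub_eq_zero.mp ((mul_eq_zero.mp hprod).resolve_right hq)

variable [Fintype σ]

theorem sum_X_ne_zero [CommSemiring R] [Nontrivial R] [Nonempty σ] :
    (∑ i, X i : MvPolynomial σ R) ≠ 0 := by
  classical
  obtain ⟨i⟩ := ‹Nonempty σ›
  intro h
  simpa [coeff_sum, coeff_X, Finsupp.single_left_inj] using congrArg (coeff (Finsupp.single i 1)) h

/-- Monomials of degree at least `d` are left unchanged, the exponent `d - |α|` being truncated. -/
noncomputable def homogenizeBySum [CommSemiring R] (p : MvPolynomial σ R) (d : ℕ) :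
    MvPolynomial σ R :=
  ∑ α ∈ p.support, monomial α (p.coeff α) * (∑ i, X i) ^ (d - ∑ i, α i)

theorem sub_homogenizeBySum [CommRing R] (p : MvPolynomial σ R) (d : ℕ) :
    p - homogenizeBySum p d =
      ∑ α ∈ p.support.filter (fun α => (∑ i, α i) < d),
        monomial α (p.coeff α) * (1 - (∑ i, X i) ^ (d - ∑ i, α i)) := by
  rw [homogenizeBySum]
  nth_rewrite 1 [← support_sum_monomial_coeff p]
  rw [← Finset.sum_sub_distrib, Finset.sum_filter]
  refine Finset.sum_congr rfl fun α _ => ?_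
  split_ifs with hlt
  · ring
  · simp [Nat.sub_eq_zero_of_le (not_lt.mp hlt)]

theorem eval_homogenizeBySum {K : Type*} [Field K] {p : MvPolynomial σ K} {d : ℕ}
    (hd : p.totalDegree ≤ d) {y : σ → K} (hy : ∑ i, y i ≠ 0) :
    eval y (homogenizeBySum p d) = (∑ i, y i) ^ d * eval ((∑ i, y i)⁻¹ • y) p := by
  set t := ∑ i, y i
  rw [homogenizeBySum, map_sum, eval_eq' _ p, Finset.mul_sum]
  refine Finset.sum_congr rfl fun α hα => ?_
  have hα_le : ∑ i, α i ≤ d := by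
    simpa [Finsupp.sum_fintype] using (le_totalDegree hα).trans hd
  simp only [map_mul, map_pow, eval_monomial, Finsupp.prod_pow, map_sum, eval_X,
    Pi.smul_apply, smul_eq_mul, mul_pow, Finset.prod_mul_distrib, Finset.prod_pow_eq_pow_sum]
  rw [pow_sub₀ t hy hα_le, inv_pow]
  ring

end MvPolynomial

/-- The "undoing" identity: if `p` has degree `d` and `p = 1` on the hyperplane
`s = 1` (where `s = x_1 + ... + x_n`), then
`p = s^d + ∑_{|α|<d} c_α x^α (1 - s^{d-|α|})`. -/
theorem stmt_6 (n : ℕ) (hn : 1 ≤ n) (p : MvPolynomial (Fin n) ℝ) (d : ℕ)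
    (hd : d = p.totalDegree)
    (hone : ∀ x : Fin n → ℝ, (∑ i, x i) = 1 → eval x p = 1) :
    p = (∑ i, X i) ^ d +
      ∑ α ∈ p.support.filter (fun α => (∑ i, α i) < d),
        (monomial α (p.coeff α)) * (1 - (∑ i, X i) ^ (d - ∑ i, α i)) := by
  have : Nonempty (Fin n) := ⟨⟨0, hn⟩⟩
  have hhom : homogenizeBySum p d = (∑ i, X i) ^ d := by
    refine eq_of_eval_eq_of_eval_ne_zero (sum_X_ne_zero (R := ℝ)) fun y hy => ?_
    rw [map_sum] at hy
    simp only [eval_X] at hy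
    have hscaled : ∑ i, ((∑ j, y j)⁻¹ • y) i = 1 := by
      simp only [Pi.smul_apply, smul_eq_mul, ← Finset.mul_sum, inv_mul_cancel₀ hy]
    rw [eval_homogenizeBySum hd.ge hy, hone _ hscaled]
    simp
  rw [← sub_homogenizeBySum, hhom]
  ring
end

section
/- The polynomial p(x_1,x_2) = x_1^3 + 3x_1x_2 + x_2^3 satisfies p(x) = 1 whenever x_1 + x_2 = 1, has all positive coefficients, degree 3, and exactly 3 = 2·3 - 3 monomials, achieving equality in the two-dimensional sharp bound deg p ≤ 2N(p) - 3. -/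
/-!
On the line `x₀ + x₁ = 1` we have
`x₀³ + 3x₀x₁ + x₁³ - 1 = (x₀ + x₁ - 1)(x₀² - x₀x₁ + x₁² + x₀ + x₁ + 1) = 0`.
The remaining claims are read off from `p` as a sum of three monomials with distinct exponents
`(3, 0)`, `(1, 1)`, `(0, 3)` and positive coefficients `1, 3, 1`.
-/

open MvPolynomial

namespace MvPolynomial

variable {σ R : Type*} [CommSemiring R]

theorem support_monomial_add_monomial_add_monomial [DecidableEq σ] {a b c : σ →₀ ℕ} {r s t : R}
    (hab : a ≠ b) (hac : a ≠ c) (hbc : b ≠ c) (hr : r ≠ 0) (hs : s ≠ 0) (ht : t ≠ 0) :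
    (monomial a r + monomial b s + monomial c t).support = {a, b, c} := by
  ext m
  simp only [mem_support_iff, coeff_add, coeff_monomial, Finset.mem_insert, Finset.mem_singleton]
  by_cases hma : m = a
  · simp [hma, hab.symm, hac.symm, hr]
  by_cases hmb : m = b
  · simp [hmb, hab, hbc.symm, hs]
  by_cases hmc : m = c
  · simp [hmc, hac, hbc, ht]
  simp [Ne.symm hma, Ne.symm hmb, Ne.symm hmc, hma, hmb, hmc]

theorem coeff_monomial_nonneg [PartialOrder R] {r : R} (hr : 0 ≤ r) (m a : σ →₀ ℕ) :
    0 ≤ coeff m (monomial a r) := by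
  classical
  rw [coeff_monomial]
  split_ifs
  exacts [hr, le_rfl]

end MvPolynomial

/-- The polynomial `x₁³ + 3x₁x₂ + x₂³` equals `1` on `x₁ + x₂ = 1`, has
positive coefficients, degree 3, and exactly `3 = 2·3 - 3` monomials:
equality in the two-dimensional sharp bound `deg p ≤ 2N(p) - 3`. -/
theorem stmt_9 (p : MvPolynomial (Fin 2) ℝ)
    (hp : p = (X 0) ^ 3 + 3 * (X 0) * (X 1) + (X 1) ^ 3) :
    (∀ x : Fin 2 → ℝ, x 0 + x 1 = 1 → eval x p = 1) ∧
    (∀ m ∈ p.support, 0 < p.coeff m) ∧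
    p.totalDegree = 3 ∧
    p.support.card = 3 ∧
    p.totalDegree = 2 * p.support.card - 3 := by
  set a : Fin 2 →₀ ℕ := Finsupp.single 0 3
  set b : Fin 2 →₀ ℕ := Finsupp.single 0 1 + Finsupp.single 1 1
  set c : Fin 2 →₀ ℕ := Finsupp.single 1 3
  have hmon : p = monomial a 1 + monomial b 3 + monomial c 1 := by
    rw [hp, X_pow_eq_monomial, X_pow_eq_monomial, mul_assoc, X, X, monomial_mul, one_mul,
      ← map_ofNat C 3, C_mul_monomial, mul_one]
  have hab : a ≠ b := by simp [a, b, Finsupp.ext_iff]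
  have hac : a ≠ c := by simp [a, c, Finsupp.ext_iff]
  have hbc : b ≠ c := by simp [b, c, Finsupp.ext_iff]
  have hsupp : p.support = {a, b, c} := hmon ▸
    support_monomial_add_monomial_add_monomial hab hac hbc one_ne_zero three_ne_zero one_ne_zero
  have hcard : p.support.card = 3 := Finset.card_eq_three.mpr ⟨a, b, c, hab, hac, hbc, hsupp⟩
  have hdeg : p.totalDegree = 3 := by
    rw [totalDegree, hsupp]
    simp [a, b, c, Finsupp.sum_add_index]
  have hcoeff_nonneg (m : Fin 2 →₀ ℕ) : 0 ≤ p.coeff m := by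
    rw [hmon, coeff_add, coeff_add]
    exact add_nonneg (add_nonneg (coeff_monomial_nonneg zero_le_one m a)
      (coeff_monomial_nonneg zero_le_three m b)) (coeff_monomial_nonneg zero_le_one m c)
  refine ⟨fun x hx => ?_, fun m hm => (hcoeff_nonneg m).lt_of_ne' (mem_support_iff.mp hm), hdeg,
    hcard, by rw [hdeg, hcard]⟩
  simp only [hp, map_add, map_mul, map_pow, eval_X, map_ofNat]
  linear_combination (x 0 ^ 2 - x 0 * x 1 + x 1 ^ 2 + x 0 + x 1 + 1) * hx
end

section
/- Let D: ℤ² → {0, P, N} be a Newton diagram with maximal support K = {(a,b) ∈ ℕ₀² : a+b < d} (d ≥ 1). Then D has at least (d+5)/2 nodes. -/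
/-- A point `(a,b)` (encoding the monomial `X₁^a X₂^b X₀^{d-a-b}` of degree `d`)
is a node of the diagram `D`: the three values `D(a,b), D(a-1,b), D(a,b-1)` are
not all zero and do not contain both a positive and a negative value (i.e. the
value set is `{P}`, `{N}`, `{0,P}`, or `{0,N}`). -/
def IsNode (D : ℤ × ℤ → ℤ) (a b : ℕ) : Prop :=
  ((0 ≤ D ((a : ℤ), (b : ℤ)) ∧ 0 ≤ D ((a : ℤ) - 1, (b : ℤ)) ∧
      0 ≤ D ((a : ℤ), (b : ℤ) - 1)) ∨
   (D ((a : ℤ), (b : ℤ)) ≤ 0 ∧ D ((a : ℤ) - 1, (b : ℤ)) ≤ 0 ∧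
      D ((a : ℤ), (b : ℤ) - 1) ≤ 0)) ∧
  (D ((a : ℤ), (b : ℤ)) ≠ 0 ∨ D ((a : ℤ) - 1, (b : ℤ)) ≠ 0 ∨
      D ((a : ℤ), (b : ℤ) - 1) ≠ 0)

instance (D : ℤ × ℤ → ℤ) (a b : ℕ) : Decidable (IsNode D a b) := by
  unfold IsNode; infer_instance

/-!
Write `e₁ = (1, 0)`, `e₂ = (0, 1)`, `K = {a + b < d}` for the support and `T = {a + b ≤ d}`.
Attach to every point `p ∈ T` its node triple `(D p, D (p - e₁), D (p - e₂))`, and let `z p` be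
the number of nonzero entries and `c p` the number of sign changes (pairs with product `-1`) in
it. A check of the 27 value patterns gives `z + 2 [z = 1] ≤ 2 [node] + c + 1`, and we sum this
over `T`.

Every point of `K` lies in exactly three node triples, so `∑ z = 3 #K`. The pairs counted by
`c` are the edges of the triangulated `K`, each counted once; grouping them instead by the
upward unit triangles `q, q + e₁, q + e₂` (of which there are `d (d - 1) / 2`, each with at most
two sign changes) gives `∑ c ≤ d (d - 1)`. The three corners of `T` have `z = 1`. Hence
`2 #nodes ≥ 3 #K + 6 - #T - d (d - 1) = d + 5`.
-/

open Finset Function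

def signChange (s t : ℤ) : ℕ := if s * t = -1 then 1 else 0

def signChanges (s t u : ℤ) : ℕ := signChange s t + signChange s u + signChange t u

def nonzeroCount (s t u : ℤ) : ℕ :=
  (if s ≠ 0 then 1 else 0) + (if t ≠ 0 then 1 else 0) + (if u ≠ 0 then 1 else 0)

def IsNodeTriple (s t u : ℤ) : Prop :=
  ((0 ≤ s ∧ 0 ≤ t ∧ 0 ≤ u) ∨ (s ≤ 0 ∧ t ≤ 0 ∧ u ≤ 0)) ∧ (s ≠ 0 ∨ t ≠ 0 ∨ u ≠ 0)

instance (s t u : ℤ) : Decidable (IsNodeTriple s t u) := by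
  unfold IsNodeTriple; infer_instance

theorem signChange_comm (s t : ℤ) : signChange s t = signChange t s := by
  simp only [signChange, mul_comm]

theorem ne_zero_of_signChange_ne_zero {s t : ℤ} (h : signChange s t ≠ 0) : s ≠ 0 ∧ t ≠ 0 := by
  unfold signChange at h
  split_ifs at h with hst
  · exact ⟨fun hs => by simp [hs] at hst, fun ht => by simp [ht] at hst⟩
  · exact absurd rfl h

theorem signChanges_le_two (s t u : ℤ) : signChanges s t u ≤ 2 := by
  unfold signChanges signChange
  split_ifs with h₁ h₂ h₃ <;> try omega
  -- three pairwise sign changes would make `(s * t * u) ^ 2 = (s * t) (s * u) (t * u)` negative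
  have : (s * t * u) ^ 2 = -1 := by linear_combination (s * u * (t * u)) * h₁ - (t * u) * h₂ + h₃
  nlinarith [sq_nonneg (s * t * u)]

theorem nonzeroCount_eq_zero_iff {s t u : ℤ} :
    nonzeroCount s t u = 0 ↔ s = 0 ∧ t = 0 ∧ u = 0 := by
  unfold nonzeroCount
  split_ifs <;> simp_all

theorem nonzeroCount_add_le {s t u : ℤ} (hs : s = 0 ∨ s = 1 ∨ s = -1)
    (ht : t = 0 ∨ t = 1 ∨ t = -1) (hu : u = 0 ∨ u = 1 ∨ u = -1) :
    nonzeroCount s t u + 2 * (if nonzeroCount s t u = 1 then 1 else 0) ≤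
      2 * (if IsNodeTriple s t u then 1 else 0) + signChanges s t u + 1 := by
  rcases hs with rfl | rfl | rfl <;> rcases ht with rfl | rfl | rfl <;>
    rcases hu with rfl | rfl | rfl <;> decide

theorem finsum_add_add {α M : Type*} [AddCommMonoid M] {f g h : α → M}
    (hf : f.HasFiniteSupport) (hg : g.HasFiniteSupport) (hh : h.HasFiniteSupport) :
    ∑ᶠ p, (f p + g p + h p) = ∑ᶠ p, f p + ∑ᶠ p, g p + ∑ᶠ p, h p := by
  rw [finsum_add_distrib (f := fun p => f p + g p) (hf.add hg) hh, finsum_add_distrib hf hg]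

section Translation

variable {G : Type*} [AddCommGroup G] {D : G → ℤ}

theorem finsum_comp_add_right {M : Type*} [AddCommMonoid M] (f : G → M) (w : G) :
    ∑ᶠ p, f (p + w) = ∑ᶠ p, f p :=
  finsum_comp_equiv (Equiv.addRight w) (f := f)

theorem hasFiniteSupport_of_ne_zero_imp (hD : D.HasFiniteSupport) (w : G) {f : G → ℕ}
    (hf : ∀ p, f p ≠ 0 → D (p + w) ≠ 0) : f.HasFiniteSupport :=
  (hD.fun_comp_of_injective (add_left_injective w)).subset hf

theorem finsum_nonzeroCount_sub (hD : D.HasFiniteSupport) (u v : G) :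
    ∑ᶠ p, nonzeroCount (D p) (D (p - u)) (D (p - v)) =
      3 * ∑ᶠ p, if D p ≠ 0 then 1 else 0 := by
  have fin : ∀ w : G, (fun p => if D (p + w) ≠ 0 then 1 else 0).HasFiniteSupport := fun w =>
    hasFiniteSupport_of_ne_zero_imp hD w fun p hp => by simpa using hp
  simp only [nonzeroCount, sub_eq_add_neg]
  rw [finsum_add_add (by simpa using fin 0) (fin (-u)) (fin (-v)),
    finsum_comp_add_right (fun p => if D p ≠ 0 then 1 else 0),
    finsum_comp_add_right (fun p => if D p ≠ 0 then 1 else 0)]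
  ring

theorem finsum_signChanges_sub_eq_add (hD : D.HasFiniteSupport) (u v : G) :
    ∑ᶠ p, signChanges (D p) (D (p - u)) (D (p - v)) =
      ∑ᶠ p, signChanges (D p) (D (p + u)) (D (p + v)) := by
  have fin : ∀ a b : G, (fun p => signChange (D (p + a)) (D (p + b))).HasFiniteSupport :=
    fun a b => hasFiniteSupport_of_ne_zero_imp hD a fun p hp =>
      (ne_zero_of_signChange_ne_zero hp).1
  have shift : ∀ a b w : G, ∑ᶠ p, signChange (D (p + a)) (D (p + b)) =
      ∑ᶠ p, signChange (D (p + b + w)) (D (p + a + w)) := fun a b w => by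
    rw [← finsum_comp_add_right _ w]
    simp only [signChange_comm, add_right_comm _ w]
  have hsub := finsum_add_add (fin 0 (-u)) (fin 0 (-v)) (fin (-u) (-v))
  have hadd := finsum_add_add (fin 0 u) (fin 0 v) (fin u v)
  -- shifting by `u`, `v`, `u + v` turns the edges `{p, p - u}`, `{p, p - v}`, `{p - u, p - v}`
  -- into `{q + u, q}`, `{q + v, q}`, `{q + v, q + u}`
  have hu := shift 0 (-u) u
  have hv := shift 0 (-v) v
  have huv := shift (-u) (-v) (u + v)
  simp only [add_zero] at hsub hadd
  simp only [add_zero, neg_add_cancel_right] at hu hv huv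
  simp only [signChanges, sub_eq_add_neg]
  rw [hsub, hadd, hu, hv, huv]
  congr 1
  exact finsum_congr fun p => by congr 2 <;> abel

end Translation

def simplex (n : ℕ) : Finset (ℕ × ℕ) := (range n ×ˢ range n).filter fun p => p.1 + p.2 < n

theorem simplex_succ (n : ℕ) : simplex (n + 1) = simplex n ∪ antidiagonal n := by
  ext ⟨a, b⟩
  simp only [simplex, mem_union, mem_filter, mem_product, mem_range,
    HasAntidiagonal.mem_antidiagonal]
  omega

theorem two_mul_card_simplex (n : ℕ) : 2 * #(simplex n) = n * (n + 1) := by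
  induction n with
  | zero => rfl
  | succ n ih =>
    have hdisj : Disjoint (simplex n) (antidiagonal n) := disjoint_left.2 fun p hp hp' => by
      simp only [simplex, mem_filter, HasAntidiagonal.mem_antidiagonal] at hp hp'
      omega
    rw [simplex_succ, card_union_of_disjoint hdisj, Finset.Nat.card_antidiagonal]
    linarith

section SimplexInZ

variable {n : ℕ}

theorem support_subset_map_simplex {M : Type*} [Zero M] {g : ℤ × ℤ → M}
    (hg : ∀ q, g q ≠ 0 → 0 ≤ q.1 ∧ 0 ≤ q.2 ∧ q.1 + q.2 < n) :
    support g ⊆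
      ↑((simplex n).map ((Nat.castEmbedding (R := ℤ)).prodMap (Nat.castEmbedding (R := ℤ)))) := by
  intro q hq
  obtain ⟨h₁, h₂, h₃⟩ := hg q hq
  simp only [coe_map, simplex, coe_filter, mem_product, mem_range, Set.mem_image,
    Set.mem_ofPred_eq]
  refine ⟨(q.1.toNat, q.2.toNat), by omega, ?_⟩
  ext <;> simp [h₁, h₂]

theorem hasFiniteSupport_of_simplex {M : Type*} [Zero M] {g : ℤ × ℤ → M}
    (hg : ∀ q, g q ≠ 0 → 0 ≤ q.1 ∧ 0 ≤ q.2 ∧ q.1 + q.2 < n) : g.HasFiniteSupport :=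
  (finite_toSet _).subset (support_subset_map_simplex hg)

theorem finsum_eq_sum_simplex {M : Type*} [AddCommMonoid M] {g : ℤ × ℤ → M}
    (hg : ∀ q, g q ≠ 0 → 0 ≤ q.1 ∧ 0 ≤ q.2 ∧ q.1 + q.2 < n) :
    ∑ᶠ q, g q = ∑ p ∈ simplex n, g (p.1, p.2) := by
  rw [finsum_eq_sum_of_support_subset g (support_subset_map_simplex hg), sum_map]
  rfl

end SimplexInZ

def nodeNonzeroCount (D : ℤ × ℤ → ℤ) (p : ℤ × ℤ) : ℕ :=
  nonzeroCount (D p) (D (p - (1, 0))) (D (p - (0, 1)))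

def nodeSignChanges (D : ℤ × ℤ → ℤ) (p : ℤ × ℤ) : ℕ :=
  signChanges (D p) (D (p - (1, 0))) (D (p - (0, 1)))

theorem isNode_iff_isNodeTriple (D : ℤ × ℤ → ℤ) (a b : ℕ) :
    IsNode D a b ↔ IsNodeTriple (D (a, b)) (D (((a : ℤ), (b : ℤ)) - (1, 0)))
      (D (((a : ℤ), (b : ℤ)) - (0, 1))) := by
  simp only [IsNode, IsNodeTriple, Prod.mk_sub_mk, sub_zero]

theorem sum_nodeNonzeroCount_add_le {D : ℤ × ℤ → ℤ}
    (hval : ∀ m, D m = 0 ∨ D m = 1 ∨ D m = -1) (s : Finset (ℕ × ℕ)) :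
    ∑ p ∈ s, nodeNonzeroCount D (p.1, p.2) +
        2 * #(s.filter fun p => nodeNonzeroCount D (p.1, p.2) = 1) ≤
      2 * #(s.filter fun p => IsNode D p.1 p.2) + ∑ p ∈ s, nodeSignChanges D (p.1, p.2) + #s := by
  have key := sum_le_sum fun (p : ℕ × ℕ) (_ : p ∈ s) =>
    nonzeroCount_add_le (hval (p.1, p.2)) (hval (((p.1 : ℤ), (p.2 : ℤ)) - (1, 0)))
      (hval (((p.1 : ℤ), (p.2 : ℤ)) - (0, 1)))
  simp only [sum_add_distrib, ← mul_sum, ← isNode_iff_isNodeTriple, ← card_filter, sum_const,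
    smul_eq_mul, mul_one] at key
  exact key

section Triangle

variable {n : ℕ} {D : ℤ × ℤ → ℤ}

theorem bounds_of_nodeTriple_ne_zero
    (hsupp : ∀ m : ℤ × ℤ, D m ≠ 0 ↔ (0 ≤ m.1 ∧ 0 ≤ m.2 ∧ m.1 + m.2 < (n : ℤ))) {q : ℤ × ℤ}
    (hq : ¬ (D q = 0 ∧ D (q - (1, 0)) = 0 ∧ D (q - (0, 1)) = 0)) :
    0 ≤ q.1 ∧ 0 ≤ q.2 ∧ q.1 + q.2 < (n + 1 : ℕ) := by
  rw [not_and_or, not_and_or] at hq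
  rcases hq with h | h | h <;> have := (hsupp _).1 h <;>
    simp only [Prod.fst_sub, Prod.snd_sub, sub_zero, Nat.cast_succ] at this ⊢ <;> omega

theorem bounds_of_upSignChanges_ne_zero
    (hsupp : ∀ m : ℤ × ℤ, D m ≠ 0 ↔ (0 ≤ m.1 ∧ 0 ≤ m.2 ∧ m.1 + m.2 < (n : ℤ))) {q : ℤ × ℤ}
    (hq : signChanges (D q) (D (q + (1, 0))) (D (q + (0, 1))) ≠ 0) :
    0 ≤ q.1 ∧ 0 ≤ q.2 ∧ q.1 + q.2 < (n - 1 : ℕ) := by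
  have : signChange (D q) (D (q + (1, 0))) ≠ 0 ∨ signChange (D q) (D (q + (0, 1))) ≠ 0 ∨
      signChange (D (q + (1, 0))) (D (q + (0, 1))) ≠ 0 := by
    unfold signChanges at hq
    omega
  rcases this with h | h | h <;> obtain ⟨h₁, h₂⟩ := ne_zero_of_signChange_ne_zero h <;>
    have h₁' := (hsupp _).1 h₁ <;> have h₂' := (hsupp _).1 h₂ <;>
    simp only [Prod.fst_add, Prod.snd_add, add_zero] at h₁' h₂' <;> omega

theorem sum_nodeNonzeroCount_simplex
    (hsupp : ∀ m : ℤ × ℤ, D m ≠ 0 ↔ (0 ≤ m.1 ∧ 0 ≤ m.2 ∧ m.1 + m.2 < (n : ℤ))) :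
    ∑ p ∈ simplex (n + 1), nodeNonzeroCount D (p.1, p.2) = 3 * #(simplex n) := by
  have hD : D.HasFiniteSupport := hasFiniteSupport_of_simplex fun q hq => (hsupp q).1 hq
  rw [← finsum_eq_sum_simplex (g := nodeNonzeroCount D) fun q hq =>
      bounds_of_nodeTriple_ne_zero hsupp (nonzeroCount_eq_zero_iff.not.1 hq)]
  change ∑ᶠ p, nonzeroCount (D p) (D (p - (1, 0))) (D (p - (0, 1))) = _
  rw [finsum_nonzeroCount_sub hD, finsum_eq_sum_simplex (g := fun p => if D p ≠ 0 then 1 else 0)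
    fun q hq => by simpa [hsupp] using hq, ← card_filter,
    filter_true_of_mem fun p hp => (hsupp _).2 ?_]
  simp only [simplex, mem_filter] at hp
  omega

theorem sum_nodeSignChanges_simplex_le
    (hsupp : ∀ m : ℤ × ℤ, D m ≠ 0 ↔ (0 ≤ m.1 ∧ 0 ≤ m.2 ∧ m.1 + m.2 < (n : ℤ))) :
    ∑ p ∈ simplex (n + 1), nodeSignChanges D (p.1, p.2) ≤ 2 * #(simplex (n - 1)) := by
  have hD : D.HasFiniteSupport := hasFiniteSupport_of_simplex fun q hq => (hsupp q).1 hq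
  rw [← finsum_eq_sum_simplex (g := nodeSignChanges D) fun q hq =>
      bounds_of_nodeTriple_ne_zero hsupp fun ⟨h₁, h₂, h₃⟩ =>
        hq (by simp [nodeSignChanges, h₁, h₂, h₃, signChanges, signChange])]
  change ∑ᶠ p, signChanges (D p) (D (p - (1, 0))) (D (p - (0, 1))) ≤ _
  rw [finsum_signChanges_sub_eq_add hD,
    finsum_eq_sum_simplex fun q => bounds_of_upSignChanges_ne_zero hsupp, mul_comm,
    ← smul_eq_mul, ← sum_const]
  exact sum_le_sum fun p _ => signChanges_le_two _ _ _

theorem three_le_card_filter_nodeNonzeroCount_eq_one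
    (hsupp : ∀ m : ℤ × ℤ, D m ≠ 0 ↔ (0 ≤ m.1 ∧ 0 ≤ m.2 ∧ m.1 + m.2 < (n : ℤ))) (hn : 1 ≤ n) :
    3 ≤ #((simplex (n + 1)).filter fun p => nodeNonzeroCount D (p.1, p.2) = 1) := by
  have hcorners : {(0, 0), (n, 0), (0, n)} ⊆
      (simplex (n + 1)).filter fun p => nodeNonzeroCount D (p.1, p.2) = 1 := by
    intro p hp
    simp only [mem_insert, mem_singleton] at hp
    rcases hp with rfl | rfl | rfl <;>
      simp [simplex, nodeNonzeroCount, nonzeroCount, hsupp] <;> omega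
  refine le_trans ?_ (card_le_card hcorners)
  rw [card_insert_of_notMem, card_pair] <;> simp <;> omega

end Triangle

/-- The DKR lemma: a two-variable Newton diagram `D` (values in `{0,+1,-1}`)
with maximal support `K = {(a,b) ∈ ℕ₀² : a + b < d}` has at least `(d+5)/2`
nodes, i.e. `d + 5 ≤ 2 ⋅ #(D)`. -/
theorem stmt_18 (d : ℕ) (hd : 1 ≤ d) (D : ℤ × ℤ → ℤ)
    (hval : ∀ m, D m = 0 ∨ D m = 1 ∨ D m = -1)
    (hsupp : ∀ m : ℤ × ℤ, D m ≠ 0 ↔ (0 ≤ m.1 ∧ 0 ≤ m.2 ∧ m.1 + m.2 < (d : ℤ))) :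
    d + 5 ≤ 2 * (((Finset.range (d + 1) ×ˢ Finset.range (d + 1)).filter
      (fun ab => ab.1 + ab.2 ≤ d ∧ IsNode D ab.1 ab.2)).card) := by
  have hnodes : (range (d + 1) ×ˢ range (d + 1)).filter
      (fun ab => ab.1 + ab.2 ≤ d ∧ IsNode D ab.1 ab.2) =
        (simplex (d + 1)).filter fun p => IsNode D p.1 p.2 := by
    ext
    simp [simplex, and_assoc]
  have hcount := sum_nodeNonzeroCount_add_le hval (simplex (d + 1))
  rw [sum_nodeNonzeroCount_simplex hsupp] at hcount
  have hchanges := sum_nodeSignChanges_simplex_le hsupp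
  have hcorners := three_le_card_filter_nodeNonzeroCount_eq_one hsupp hd
  have hT := two_mul_card_simplex (d + 1)
  have hK := two_mul_card_simplex d
  have hK' := two_mul_card_simplex (d - 1)
  obtain ⟨m, rfl⟩ : ∃ m, d = m + 1 := ⟨d - 1, by omega⟩
  simp only [add_tsub_cancel_right] at hK' hchanges
  rw [hnodes]
  linarith
end
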